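/- arXiv:2409.13024 — 4 statements merged into one kernel-verified Lean document; each statement's English description precedes it below -/
import Mathlib

section
/- Conversely, let (Ω, 𝓔, p) be a fragment where span(Ω) and span(𝓔) carry the bilinear map p, and suppose there exist injective linear maps σ on span(Ω) and τ on span(𝓔) and a tomographic bilinear map q with q(σ(s), τ(e)) = p(s, e) for all s ∈ Ω, e ∈ 𝓔. Then p itself is tomographic: distinct elements of span(Ω) are separated by 𝓔, and distinct elements of span(𝓔) are separated by Ω. -/
/-!
Since Ω and 𝓔 span, the relation q (σ s) (τ e) = p s e on Ω × 𝓔 forces p = q ∘ (σ × τ) as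
bilinear maps. Tomography of q on the ranges of σ and τ, together with injectivity of σ and τ,
then makes p separating on both sides, and a separating bilinear map is already separating
when tested against a spanning set.
-/

namespace LinearMap

variable {R M N U V P : Type*} [CommRing R]
  [AddCommGroup M] [Module R M] [AddCommGroup N] [Module R N]
  [AddCommGroup U] [Module R U] [AddCommGroup V] [Module R V]
  [AddCommGroup P] [Module R P]

theorem ext_on₂ {s : Set M} {t : Set N} (hs : Submodule.span R s = ⊤)
    (ht : Submodule.span R t = ⊤) {B B' : M →ₗ[R] N →ₗ[R] P}
    (h : ∀ x ∈ s, ∀ y ∈ t, B x y = B' x y) : B = B' :=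
  ext_on hs fun x hx ↦ ext_on ht fun y hy ↦ h x hx y hy

theorem separatingLeft_compl₁₂ {q : U →ₗ[R] V →ₗ[R] P} {σ : M →ₗ[R] U} {τ : N →ₗ[R] V}
    (hσ : Function.Injective σ) (hq : ∀ u ∈ range σ, (∀ v ∈ range τ, q u v = 0) → u = 0) :
    (q.compl₁₂ σ τ).SeparatingLeft := by
  intro x hx
  apply hσ
  rw [map_zero]
  refine hq _ ⟨x, rfl⟩ ?_
  rintro _ ⟨y, rfl⟩
  exact hx y

theorem separatingRight_compl₁₂ {q : U →ₗ[R] V →ₗ[R] P} {σ : M →ₗ[R] U} {τ : N →ₗ[R] V}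
    (hτ : Function.Injective τ) (hq : ∀ v ∈ range τ, (∀ u ∈ range σ, q u v = 0) → v = 0) :
    (q.compl₁₂ σ τ).SeparatingRight :=
  flip_separatingLeft.1 (LinearMap.separatingLeft_compl₁₂ (q := q.flip) hτ hq)

theorem SeparatingLeft.eq_of_eqOn_of_span_eq_top {B : M →ₗ[R] N →ₗ[R] P}
    (hB : B.SeparatingLeft) {t : Set N} (ht : Submodule.span R t = ⊤) {x x' : M}
    (h : ∀ y ∈ t, B x y = B x' y) : x = x' :=
  ker_eq_bot.1 (separatingLeft_iff_ker_eq_bot.1 hB) (ext_on ht h)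

theorem SeparatingRight.eq_of_eqOn_of_span_eq_top {B : M →ₗ[R] N →ₗ[R] P}
    (hB : B.SeparatingRight) {s : Set M} (hs : Submodule.span R s = ⊤) {y y' : N}
    (h : ∀ x ∈ s, B x y = B x y') : y = y' :=
  (flip_separatingLeft.2 hB).eq_of_eqOn_of_span_eq_top hs h

end LinearMap

theorem stmt6_general
    {S E U V : Type*}
    [AddCommGroup S] [Module ℝ S]
    [AddCommGroup E] [Module ℝ E]
    [AddCommGroup U] [Module ℝ U]
    [AddCommGroup V] [Module ℝ V]
    (Ω : Set S) (𝓔 : Set E)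
    (hΩspan : Submodule.span ℝ Ω = ⊤) (h𝓔span : Submodule.span ℝ 𝓔 = ⊤)
    (p : S →ₗ[ℝ] E →ₗ[ℝ] ℝ)
    (σ : S →ₗ[ℝ] U) (τ : E →ₗ[ℝ] V) (q : U →ₗ[ℝ] V →ₗ[ℝ] ℝ)
    (hσ : Function.Injective σ) (hτ : Function.Injective τ)
    (hq : ∀ s ∈ Ω, ∀ e ∈ 𝓔, q (σ s) (τ e) = p s e)
    (hqtomoL : ∀ u ∈ LinearMap.range σ, (∀ v ∈ LinearMap.range τ, q u v = 0) → u = 0)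
    (hqtomoR : ∀ v ∈ LinearMap.range τ, (∀ u ∈ LinearMap.range σ, q u v = 0) → v = 0) :
    (∀ s s' : S, (∀ e ∈ 𝓔, p s e = p s' e) → s = s') ∧
    (∀ e e' : E, (∀ s ∈ Ω, p s e = p s e') → e = e') := by
  obtain rfl : q.compl₁₂ σ τ = p := LinearMap.ext_on₂ hΩspan h𝓔span hq
  exact ⟨fun _ _ ↦
      (LinearMap.separatingLeft_compl₁₂ hσ hqtomoL).eq_of_eqOn_of_span_eq_top h𝓔span,
    fun _ _ ↦
      (LinearMap.separatingRight_compl₁₂ hτ hqtomoR).eq_of_eqOn_of_span_eq_top hΩspan⟩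

/-- Conversely: if a fragment admits a faithful (injective) shadow map onto a
tomographic GPT, then the fragment itself is tomographic. -/
theorem stmt6
    {S E U V : Type*}
    [AddCommGroup S] [Module ℝ S] [FiniteDimensional ℝ S]
    [AddCommGroup E] [Module ℝ E] [FiniteDimensional ℝ E]
    [AddCommGroup U] [Module ℝ U] [FiniteDimensional ℝ U]
    [AddCommGroup V] [Module ℝ V] [FiniteDimensional ℝ V]
    (Ω : Set S) (𝓔 : Set E)
    (hΩspan : Submodule.span ℝ Ω = ⊤) (h𝓔span : Submodule.span ℝ 𝓔 = ⊤)
    (p : S →ₗ[ℝ] E →ₗ[ℝ] ℝ)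
    (σ : S →ₗ[ℝ] U) (τ : E →ₗ[ℝ] V) (q : U →ₗ[ℝ] V →ₗ[ℝ] ℝ)
    (hσ : Function.Injective σ) (hτ : Function.Injective τ)
    (hq : ∀ s ∈ Ω, ∀ e ∈ 𝓔, q (σ s) (τ e) = p s e)
    (hqtomoL : ∀ u ∈ LinearMap.range σ, (∀ v ∈ LinearMap.range τ, q u v = 0) → u = 0)
    (hqtomoR : ∀ v ∈ LinearMap.range τ, (∀ u ∈ LinearMap.range σ, q u v = 0) → v = 0) :
    (∀ s s' : S, (∀ e ∈ 𝓔, p s e = p s' e) → s = s') ∧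
    (∀ e e' : E, (∀ s ∈ Ω, p s e = p s e') → e = e') :=
  stmt6_general Ω 𝓔 hΩspan h𝓔span p σ τ q hσ hτ hq hqtomoL hqtomoR
end

section
/- Let G be a GPT system with state space Ω (compact convex, containing 0, with 0 ∉ affineSpan of normalized states), effect space 𝓔 (compact convex, containing 0 and unit u, closed under complements), and tomographic bilinear probability rule p with values in [0,1] on Ω × 𝓔 and p(s, u) = 1 for all normalized s. If (ι, κ) is a GPT embedding of G into itself (ι a state map with ι(Ω) ⊆ Ω, κ an effect map with κ(𝓔) ⊆ 𝓔 and κ(u) = u, and p(ι(s), κ(e)) = p(s, e) for all s, e), then ι(Ω) = Ω and κ(𝓔) = 𝓔; that is, every self-embedding of a GPT is an isomorphism. -/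
/-- A GPT system: normalized states, effects, unit effect, and a tomographic
bilinear probability rule. -/
structure GPTSystem (U V : Type*) [NormedAddCommGroup U] [NormedSpace ℝ U]
    [NormedAddCommGroup V] [NormedSpace ℝ V] where
  normStates : Set U
  effects : Set V
  unit : V
  prob : U →ₗ[ℝ] V →ₗ[ℝ] ℝ
  compact_normStates : IsCompact normStates
  convex_normStates : Convex ℝ normStates
  zero_not_mem_affineSpan : (0 : U) ∉ affineSpan ℝ normStates
  compact_effects : IsCompact effects
  convex_effects : Convex ℝ effects
  zero_mem_effects : (0 : V) ∈ effects
  unit_mem_effects : unit ∈ effects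
  compl_effects : ∀ e ∈ effects, ∃ e' ∈ effects, e + e' = unit
  prob_mem_Icc : ∀ s ∈ convexHull ℝ (insert 0 normStates), ∀ e ∈ effects,
    prob s e ∈ Set.Icc (0 : ℝ) 1
  prob_unit : ∀ s ∈ normStates, prob s unit = 1
  tomo_states : ∀ s ∈ convexHull ℝ (insert 0 normStates),
    ∀ s' ∈ convexHull ℝ (insert 0 normStates),
    (∀ e ∈ effects, prob s e = prob s' e) → s = s'
  tomo_effects : ∀ e ∈ effects, ∀ e' ∈ effects,
    (∀ s ∈ convexHull ℝ (insert 0 normStates), prob s e = prob s e') → e = e'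

/-- The (full, subnormalized) state space of a GPT system. -/
def GPTSystem.states {U V : Type*} [NormedAddCommGroup U] [NormedSpace ℝ U]
    [NormedAddCommGroup V] [NormedSpace ℝ V] (G : GPTSystem U V) : Set U :=
  convexHull ℝ (insert 0 G.normStates)


/-- Abstract key lemma: a linear self-map of a compact set that is expansive with
respect to a separating subadditive "distinguishability" functional is surjective. -/
lemma surj_aux {X : Type*} [NormedAddCommGroup X] [NormedSpace ℝ X] [FiniteDimensional ℝ X]
    (K : Set X) (hK : IsCompact K) (hne : K.Nonempty)
    (f : X →ₗ[ℝ] X) (hf : Set.MapsTo f K K)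
    (N : X → ℝ) (C : ℝ) (hC : 0 ≤ C)
    (hN0 : ∀ v, 0 ≤ N v)
    (hNle : ∀ v, N v ≤ C * ‖v‖)
    (hNtri : ∀ a b c, N (a - b) ≤ N (a - c) + N (c - b))
    (hNpos : ∀ a ∈ K, ∀ b ∈ K, N (a - b) = 0 → a = b)
    (hNexp : ∀ a ∈ K, ∀ b ∈ K, N (a - b) ≤ N (f a - f b)) :
    f '' K = K := by
  have hsub : f '' K ⊆ K := Set.image_subset_iff.mpr hf
  refine Set.Subset.antisymm hsub (fun x hx => ?_)
  by_contra hxK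
  have hfc : Continuous f := f.continuous_of_finiteDimensional
  have hfK : IsCompact (f '' K) := hK.image hfc
  have hfne : (f '' K).Nonempty := hne.image f
  have glip : LipschitzWith ⟨C, hC⟩ (fun y => N (x - y)) := by
    apply LipschitzWith.of_dist_le_mul
    intro y y'
    show dist (N (x - y)) (N (x - y')) ≤ C * dist y y'
    rw [Real.dist_eq, dist_eq_norm, abs_sub_le_iff]
    constructor
    · have h1 := hNtri x y y'
      have h2 : N (y' - y) ≤ C * ‖y' - y‖ := hNle _
      rw [norm_sub_rev] at h2
      linarith
    · have h1 := hNtri x y' y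
      have h2 : N (y - y') ≤ C * ‖y - y'‖ := hNle _
      linarith
  obtain ⟨y₀, hy₀, hmin⟩ := hfK.exists_isMinOn hfne glip.continuous.continuousOn
  set c := N (x - y₀) with hcdef
  have hc : 0 < c := by
    rcases lt_or_eq_of_le (hN0 (x - y₀)) with h | h
    · exact h
    · have hxy : x = y₀ := hNpos x hx y₀ (hsub hy₀) h.symm
      exact absurd (hxy ▸ hy₀) hxK
  have hmem : ∀ j, f^[j] x ∈ K := fun j => hf.iterate j hx
  obtain ⟨y, hyK, φ, hφ, hconv⟩ := hK.tendsto_subseq hmem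
  set ε := c / (2 * (C + 1)) with hεdef
  have hε : 0 < ε := div_pos hc (by linarith)
  obtain ⟨k, hk⟩ := (Metric.tendsto_atTop.mp hconv) ε hε
  set n := φ k with hn
  set m := φ (k + 1) with hm
  have hnm : n < m := hφ (lt_add_one k)
  have hdn : dist (f^[n] x) y < ε := hk k le_rfl
  have hdm : dist (f^[m] x) y < ε := hk (k + 1) (le_of_lt (lt_add_one k))
  -- expansion along iterates
  have hiter : ∀ j, ∀ a ∈ K, ∀ b ∈ K, N (a - b) ≤ N (f^[j] a - f^[j] b) := by
    intro j
    induction j with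
    | zero => intro a _ b _; simp
    | succ j ih =>
        intro a ha b hb
        calc N (a - b) ≤ N (f a - f b) := hNexp a ha b hb
          _ ≤ N (f^[j] (f a) - f^[j] (f b)) := ih (f a) (hf ha) (f b) (hf hb)
          _ = N (f^[j + 1] a - f^[j + 1] b) := by
              rw [Function.iterate_succ_apply, Function.iterate_succ_apply]
  -- the iterate f^[m-n] x lies in f '' K
  have hjm : f^[m - n] x ∈ f '' K := by
    obtain ⟨j, hj⟩ : ∃ j, m - n = j + 1 := ⟨m - n - 1, by omega⟩
    rw [hj, Function.iterate_succ_apply']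
    exact ⟨f^[j] x, hmem j, rfl⟩
  have hle1 : c ≤ N (x - f^[m - n] x) := hmin hjm
  have heq : f^[n] (f^[m - n] x) = f^[m] x := by
    rw [← Function.iterate_add_apply]
    congr 1
    omega
  have hle2 : N (x - f^[m - n] x) ≤ N (f^[n] x - f^[m] x) := by
    have := hiter n x hx (f^[m - n] x) (hmem _)
    rwa [heq] at this
  have hlt : N (f^[n] x - f^[m] x) < c := by
    have h1 := hNtri (f^[n] x) (f^[m] x) y
    have h2 : N (f^[n] x - y) ≤ C * ‖f^[n] x - y‖ := hNle _
    have h3 : N (y - f^[m] x) ≤ C * ‖y - f^[m] x‖ := hNle _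
    rw [← dist_eq_norm] at h2
    rw [norm_sub_rev, ← dist_eq_norm] at h3
    have hkey : C * ε + C * ε < c := by
      have h2C : (0:ℝ) < 2 * (C + 1) := by linarith
      have : C * ε + C * ε = c * (2 * C) / (2 * (C + 1)) := by
        rw [hεdef]; field_simp; ring
      rw [this, div_lt_iff₀ h2C]
      nlinarith
    nlinarith [mul_le_mul_of_nonneg_left hdn.le hC, mul_le_mul_of_nonneg_left hdm.le hC]
  linarith

/-- Every self-embedding of a GPT is an isomorphism: its state and effect maps are
surjective onto the state and effect spaces. -/
theorem stmt8
    {U V : Type*} [NormedAddCommGroup U] [NormedSpace ℝ U] [FiniteDimensional ℝ U]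
    [NormedAddCommGroup V] [NormedSpace ℝ V] [FiniteDimensional ℝ V]
    (G : GPTSystem U V)
    (ι : U →ₗ[ℝ] U) (κ : V →ₗ[ℝ] V)
    (hι : ι '' G.states ⊆ G.states)
    (hκ : κ '' G.effects ⊆ G.effects)
    (hκu : κ G.unit = G.unit)
    (hp : ∀ s ∈ G.states, ∀ e ∈ G.effects, G.prob (ι s) (κ e) = G.prob s e) :
    ι '' G.states = G.states ∧ κ '' G.effects = G.effects := by
  classical
  -- a continuous bilinear version of the probability rule
  let L : U →ₗ[ℝ] (V →L[ℝ] ℝ) :=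
    { toFun := fun v => LinearMap.toContinuousLinearMap (G.prob v)
      map_add' := by intro a b; ext e; simp
      map_smul' := by intro c a; ext e; simp }
  let B : U →L[ℝ] (V →L[ℝ] ℝ) := LinearMap.toContinuousLinearMap L
  have hB : ∀ v e, G.prob v e = B v e := fun v e => rfl
  have hBle : ∀ v e, |G.prob v e| ≤ ‖B‖ * ‖v‖ * ‖e‖ := fun v e => by
    rw [hB, ← Real.norm_eq_abs]; exact B.le_opNorm₂ v e
  -- compactness and nonemptiness of the state and effect spaces
  have hKstates : IsCompact G.states := by
    rcases Set.eq_empty_or_nonempty G.normStates with h | h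
    · rw [GPTSystem.states, h]
      simp only [insert_empty_eq, convexHull_singleton]
      exact isCompact_singleton
    · have hset : G.states = (fun p : ℝ × U => p.1 • p.2) ''
          (Set.Icc (0:ℝ) 1 ×ˢ G.normStates) := by
        ext x
        constructor
        · intro hx
          rw [GPTSystem.states, convexHull_insert h] at hx
          obtain ⟨z, hz, hseg⟩ := Set.mem_iUnion₂.mp hx
          rw [Set.mem_singleton_iff] at hz
          subst hz
          obtain ⟨y, hy, hseg'⟩ := Set.mem_iUnion₂.mp hseg
          rw [G.convex_normStates.convexHull_eq] at hy
          rw [segment_eq_image] at hseg'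
          obtain ⟨t, ht, rfl⟩ := hseg'
          exact ⟨(t, y), ⟨ht, hy⟩, by simp⟩
        · rintro ⟨⟨t, z⟩, ⟨ht, hz⟩, rfl⟩
          have hsub := (convex_convexHull ℝ (insert (0:U) G.normStates)).segment_subset
            (subset_convexHull ℝ _ (Set.mem_insert 0 _))
            (subset_convexHull ℝ _ (Set.mem_insert_of_mem 0 hz))
          apply hsub
          rw [segment_eq_image]
          exact ⟨t, ht, by simp⟩
      rw [hset]
      exact (isCompact_Icc.prod G.compact_normStates).image
        (continuous_fst.smul continuous_snd)
  have hKeff : IsCompact G.effects := G.compact_effects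
  have h0s : (0 : U) ∈ G.states := subset_convexHull ℝ _ (Set.mem_insert _ _)
  have hnes : G.states.Nonempty := ⟨0, h0s⟩
  have hnee : G.effects.Nonempty := ⟨0, G.zero_mem_effects⟩
  -- norm bounds on the compact sets
  obtain ⟨M₁, hM₁⟩ := hKeff.isBounded.exists_norm_le
  obtain ⟨M₂, hM₂⟩ := hKstates.isBounded.exists_norm_le
  have hM₁0 : 0 ≤ M₁ := le_trans (norm_nonneg _) (hM₁ 0 G.zero_mem_effects)
  have hM₂0 : 0 ≤ M₂ := le_trans (norm_nonneg _) (hM₂ 0 h0s)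
  -- the two distinguishability seminorms
  set N₁ : U → ℝ := fun v => sSup ((fun e => |G.prob v e|) '' G.effects) with hN₁def
  set N₂ : V → ℝ := fun w => sSup ((fun s => |G.prob s w|) '' G.states) with hN₂def
  have hbdd₁ : ∀ v, BddAbove ((fun e => |G.prob v e|) '' G.effects) := by
    intro v
    refine ⟨‖B‖ * ‖v‖ * M₁, ?_⟩
    rintro _ ⟨e, he, rfl⟩
    calc |G.prob v e| ≤ ‖B‖ * ‖v‖ * ‖e‖ := hBle v e
      _ ≤ ‖B‖ * ‖v‖ * M₁ := by gcongr; exact hM₁ e he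
  have hbdd₂ : ∀ w, BddAbove ((fun s => |G.prob s w|) '' G.states) := by
    intro w
    refine ⟨‖B‖ * M₂ * ‖w‖, ?_⟩
    rintro _ ⟨s, hs, rfl⟩
    calc |G.prob s w| ≤ ‖B‖ * ‖s‖ * ‖w‖ := hBle s w
      _ ≤ ‖B‖ * M₂ * ‖w‖ := by gcongr; exact hM₂ s hs
  have hN₁0 : ∀ v, 0 ≤ N₁ v := fun v =>
    Real.sSup_nonneg (by rintro _ ⟨e, he, rfl⟩; exact abs_nonneg _)
  have hN₂0 : ∀ w, 0 ≤ N₂ w := fun w =>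
    Real.sSup_nonneg (by rintro _ ⟨s, hs, rfl⟩; exact abs_nonneg _)
  have hN₁le : ∀ v, N₁ v ≤ (‖B‖ * M₁) * ‖v‖ := by
    intro v
    apply Real.sSup_le
    · rintro _ ⟨e, he, rfl⟩
      calc |G.prob v e| ≤ ‖B‖ * ‖v‖ * ‖e‖ := hBle v e
        _ ≤ ‖B‖ * ‖v‖ * M₁ := by gcongr; exact hM₁ e he
        _ = (‖B‖ * M₁) * ‖v‖ := by ring
    · positivity
  have hN₂le : ∀ w, N₂ w ≤ (‖B‖ * M₂) * ‖w‖ := by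
    intro w
    apply Real.sSup_le
    · rintro _ ⟨s, hs, rfl⟩
      calc |G.prob s w| ≤ ‖B‖ * ‖s‖ * ‖w‖ := hBle s w
        _ ≤ ‖B‖ * M₂ * ‖w‖ := by gcongr; exact hM₂ s hs
    · positivity
  have hmemN₁ : ∀ v, ∀ e ∈ G.effects, |G.prob v e| ≤ N₁ v := fun v e he =>
    le_csSup (hbdd₁ v) ⟨e, he, rfl⟩
  have hmemN₂ : ∀ w, ∀ s ∈ G.states, |G.prob s w| ≤ N₂ w := fun w s hs =>
    le_csSup (hbdd₂ w) ⟨s, hs, rfl⟩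
  have hN₁tri : ∀ a b c : U, N₁ (a - b) ≤ N₁ (a - c) + N₁ (c - b) := by
    intro a b c
    apply Real.sSup_le
    · rintro _ ⟨e, he, rfl⟩
      have heq : G.prob (a - b) e = G.prob (a - c) e + G.prob (c - b) e := by
        simp only [map_sub, LinearMap.sub_apply]; ring
      calc |G.prob (a - b) e| ≤ |G.prob (a - c) e| + |G.prob (c - b) e| := by
            rw [heq]; exact abs_add_le _ _
        _ ≤ N₁ (a - c) + N₁ (c - b) := add_le_add (hmemN₁ _ e he) (hmemN₁ _ e he)
    · exact add_nonneg (hN₁0 _) (hN₁0 _)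
  have hN₂tri : ∀ a b c : V, N₂ (a - b) ≤ N₂ (a - c) + N₂ (c - b) := by
    intro a b c
    apply Real.sSup_le
    · rintro _ ⟨s, hs, rfl⟩
      have heq : G.prob s (a - b) = G.prob s (a - c) + G.prob s (c - b) := by
        simp only [map_sub]; ring
      calc |G.prob s (a - b)| ≤ |G.prob s (a - c)| + |G.prob s (c - b)| := by
            rw [heq]; exact abs_add_le _ _
        _ ≤ N₂ (a - c) + N₂ (c - b) := add_le_add (hmemN₂ _ s hs) (hmemN₂ _ s hs)
    · exact add_nonneg (hN₂0 _) (hN₂0 _)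
  have hN₁pos : ∀ a ∈ G.states, ∀ b ∈ G.states, N₁ (a - b) = 0 → a = b := by
    intro a ha b hb h
    apply G.tomo_states a ha b hb
    intro e he
    have h1 : |G.prob (a - b) e| ≤ 0 := h ▸ hmemN₁ (a - b) e he
    have h2 : G.prob (a - b) e = 0 := abs_eq_zero.mp (le_antisymm h1 (abs_nonneg _))
    have h3 : G.prob a e - G.prob b e = 0 := by
      rw [← h2]; simp only [map_sub, LinearMap.sub_apply]
    linarith
  have hN₂pos : ∀ a ∈ G.effects, ∀ b ∈ G.effects, N₂ (a - b) = 0 → a = b := by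
    intro a ha b hb h
    apply G.tomo_effects a ha b hb
    intro s hs
    have h1 : |G.prob s (a - b)| ≤ 0 := h ▸ hmemN₂ (a - b) s hs
    have h2 : G.prob s (a - b) = 0 := abs_eq_zero.mp (le_antisymm h1 (abs_nonneg _))
    have h3 : G.prob s a - G.prob s b = 0 := by rw [← h2]; simp only [map_sub]
    linarith
  have hιK : Set.MapsTo ι G.states G.states := Set.image_subset_iff.mp hι
  have hκK : Set.MapsTo κ G.effects G.effects := Set.image_subset_iff.mp hκ
  have hN₁exp : ∀ a ∈ G.states, ∀ b ∈ G.states, N₁ (a - b) ≤ N₁ (ι a - ι b) := by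
    intro a ha b hb
    apply Real.sSup_le
    · rintro _ ⟨e, he, rfl⟩
      have heq : G.prob (a - b) e = G.prob (ι a - ι b) (κ e) := by
        simp only [map_sub, LinearMap.sub_apply]
        rw [hp a ha e he, hp b hb e he]
      show |G.prob (a - b) e| ≤ N₁ (ι a - ι b)
      rw [heq]
      exact hmemN₁ _ (κ e) (hκK he)
    · exact hN₁0 _
  have hN₂exp : ∀ a ∈ G.effects, ∀ b ∈ G.effects, N₂ (a - b) ≤ N₂ (κ a - κ b) := by
    intro a ha b hb
    apply Real.sSup_le
    · rintro _ ⟨s, hs, rfl⟩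
      have heq : G.prob s (a - b) = G.prob (ι s) (κ a - κ b) := by
        simp only [map_sub, LinearMap.sub_apply]
        rw [hp s hs a ha, hp s hs b hb]
      show |G.prob s (a - b)| ≤ N₂ (κ a - κ b)
      rw [heq]
      exact hmemN₂ _ (ι s) (hιK hs)
    · exact hN₂0 _
  constructor
  · exact surj_aux G.states hKstates hnes ι hιK N₁ (‖B‖ * M₁)
      (by positivity) hN₁0 hN₁le hN₁tri hN₁pos hN₁exp
  · exact surj_aux G.effects hKeff hnee κ hκK N₂ (‖B‖ * M₂)
      (by positivity) hN₂0 hN₂le hN₂tri hN₂pos hN₂exp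
end

section
/- Let F and G be GPT systems (each with tomographic probability rules), and suppose there exist GPT embeddings (ι₁, κ₁) : F → G and (ι₂, κ₂) : G → F (probability-preserving, unit-preserving pairs of state and effect maps). Then both embeddings are invertible, i.e., F and G are isomorphic as GPTs: ι₁ and ι₂ are bijections between the state spaces and κ₁, κ₂ are bijections between the effect spaces. -/
/-! The statistics `s ↦ (e ↦ prob s e)` separate states (tomography), and a probability-preserving
self-map `(ι, κ)` never decreases the sup-distance between the statistics of two states, since
`prob s e = prob (ι s) (κ e)` and `κ` maps effects to effects. Such a self-map of a compact set
`S` is onto: the orbit of a state `t` has two close points `ι^[n] t`, `ι^[m] t` with `n < m`, so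
`t` is close to `ι^[m - n] t ∈ ι '' S`, and `ι '' S` is closed. The same holds for effects, with
the roles of states and effects exchanged. Applied to `ι₂ ∘ ι₁` and `ι₁ ∘ ι₂`, this makes both
embeddings onto; they are injective by tomography. -/

open Set
open scoped Pointwise

theorem IsCompact.exists_lt_dist_lt {Y : Type*} [PseudoMetricSpace Y] {K : Set Y}
    (hK : IsCompact K) {u : ℕ → Y} (hu : ∀ n, u n ∈ K) {ε : ℝ} (hε : 0 < ε) :
    ∃ n m, n < m ∧ dist (u n) (u m) < ε := by
  obtain ⟨a, -, φ, hφ, hlim⟩ := hK.tendsto_subseq hu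
  obtain ⟨N, hN⟩ := Metric.cauchySeq_iff'.1 hlim.cauchySeq ε hε
  exact ⟨φ N, φ (N + 1), hφ N.lt_succ_self, by rw [dist_comm]; exact hN (N + 1) N.le_succ⟩

theorem IsCompact.surjOn_of_dist_le_dist {X Y : Type*} [TopologicalSpace X] [MetricSpace Y]
    {S : Set X} (hS : IsCompact S) {f : X → X} (hf : ContinuousOn f S) (hfS : MapsTo f S S)
    {T : X → Y} (hT : ContinuousOn T S) (hTS : InjOn T S)
    (hexp : ∀ x ∈ S, ∀ y ∈ S, dist (T x) (T y) ≤ dist (T (f x)) (T (f y))) :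
    SurjOn f S S := by
  have hexp_iterate : ∀ k, ∀ x ∈ S, ∀ y ∈ S,
      dist (T x) (T y) ≤ dist (T (f^[k] x)) (T (f^[k] y)) := by
    intro k
    induction k with
    | zero => intro x _ y _; rfl
    | succ k ih =>
      intro x hx y hy
      simp only [Function.iterate_succ_apply]
      exact (hexp x hx y hy).trans (ih _ (hfS hx) _ (hfS hy))
  have hTfS : IsCompact (T '' (f '' S)) :=
    (hS.image_of_continuousOn hf).image_of_continuousOn (hT.mono (image_subset_iff.2 hfS))
  intro t ht
  suffices T t ∈ T '' (f '' S) by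
    obtain ⟨_, ⟨s, hs, rfl⟩, hst⟩ := this
    exact ⟨s, hs, hTS (hfS hs) ht hst⟩
  refine hTfS.isClosed.closure_subset (Metric.mem_closure_iff.2 fun ε hε => ?_)
  obtain ⟨n, m, hnm, hdist⟩ := (hS.image_of_continuousOn hT).exists_lt_dist_lt
    (fun k => mem_image_of_mem T (hfS.iterate k ht)) hε
  obtain ⟨j, rfl⟩ := Nat.exists_eq_add_of_lt hnm
  refine ⟨T (f^[j + 1] t), mem_image_of_mem T ⟨f^[j] t, hfS.iterate j ht, ?_⟩, ?_⟩
  · exact (Function.iterate_succ_apply' f j t).symm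
  · calc dist (T t) (T (f^[j + 1] t))
        ≤ dist (T (f^[n] t)) (T (f^[n] (f^[j + 1] t))) :=
          hexp_iterate n t ht _ (hfS.iterate _ ht)
      _ < ε := by rwa [← Function.iterate_add_apply, ← add_assoc]

theorem surjOn_of_preserves_pairing {U V : Type*}
    [NormedAddCommGroup U] [NormedSpace ℝ U] [FiniteDimensional ℝ U]
    [NormedAddCommGroup V] [NormedSpace ℝ V] [FiniteDimensional ℝ V]
    (p : U →ₗ[ℝ] V →ₗ[ℝ] ℝ) {S : Set U} {E : Set V} (hS : IsCompact S) (hE : IsCompact E)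
    {ι : U →ₗ[ℝ] U} {κ : V →ₗ[ℝ] V} (hιS : MapsTo ι S S) (hκE : MapsTo κ E E)
    (hp : ∀ s ∈ S, ∀ e ∈ E, p (ι s) (κ e) = p s e)
    (htomo : ∀ s ∈ S, ∀ s' ∈ S, (∀ e ∈ E, p s e = p s' e) → s = s') :
    SurjOn ι S S := by
  have : CompactSpace E := isCompact_iff_compactSpace.mp hE
  let T : C(U, C(E, ℝ)) := ContinuousMap.curry
    ⟨fun x => p x.1 x.2, p.toContinuousBilinearMap.continuous₂.comp
      (continuous_fst.prodMk (continuous_subtype_val.comp continuous_snd))⟩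
  refine hS.surjOn_of_dist_le_dist ι.continuous_of_finiteDimensional.continuousOn hιS
    T.continuous.continuousOn ?_ ?_
  · exact fun s hs s' hs' h => htomo s hs s' hs' fun e he => DFunLike.congr_fun h ⟨e, he⟩
  · refine fun x hx y hy => (ContinuousMap.dist_le dist_nonneg).2 fun e => ?_
    calc dist (p x e) (p y e) = dist (p (ι x) (κ e)) (p (ι y) (κ e)) := by
          rw [hp x hx e e.2, hp y hy e e.2]
      _ ≤ dist (T (ι x)) (T (ι y)) :=
          ContinuousMap.dist_apply_le_dist (f := T (ι x)) (g := T (ι y)) ⟨κ e, hκE e.2⟩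

theorem Convex.convexHull_insert_zero {E : Type*} [AddCommGroup E] [Module ℝ E] {s : Set E}
    (hs : Convex ℝ s) (hne : s.Nonempty) : convexHull ℝ (insert 0 s) = Icc (0 : ℝ) 1 • s := by
  ext x
  simp only [convexHull_insert hne, hs.convexHull_eq, convexJoin_singleton_left,
    segment_eq_image', sub_zero, zero_add, mem_iUnion, mem_image, exists_prop, mem_smul]
  exact ⟨fun ⟨y, hy, a, ha, hax⟩ => ⟨a, ha, y, hy, hax⟩,
    fun ⟨a, ha, y, hy, hax⟩ => ⟨y, hy, a, ha, hax⟩⟩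

namespace GPTSystem

variable {U₁ V₁ U₂ V₂ U₃ V₃ : Type*}
  [NormedAddCommGroup U₁] [NormedSpace ℝ U₁] [NormedAddCommGroup V₁] [NormedSpace ℝ V₁]
  [NormedAddCommGroup U₂] [NormedSpace ℝ U₂] [NormedAddCommGroup V₂] [NormedSpace ℝ V₂]
  [NormedAddCommGroup U₃] [NormedSpace ℝ U₃] [NormedAddCommGroup V₃] [NormedSpace ℝ V₃]

theorem isCompact_states (F : GPTSystem U₁ V₁) : IsCompact F.states := by
  rcases F.normStates.eq_empty_or_nonempty with h | h
  · simp [states, h]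
  · rw [states, F.convex_normStates.convexHull_insert_zero h]
    exact isCompact_Icc.smul_set F.compact_normStates

structure IsProbPreserving (F : GPTSystem U₁ V₁) (G : GPTSystem U₂ V₂)
    (ι : U₁ →ₗ[ℝ] U₂) (κ : V₁ →ₗ[ℝ] V₂) : Prop where
  mapsTo_states : MapsTo ι F.states G.states
  mapsTo_effects : MapsTo κ F.effects G.effects
  prob_map : ∀ s ∈ F.states, ∀ e ∈ F.effects, G.prob (ι s) (κ e) = F.prob s e

namespace IsProbPreserving

variable {F : GPTSystem U₁ V₁} {G : GPTSystem U₂ V₂} {H : GPTSystem U₃ V₃}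
  {ι : U₁ →ₗ[ℝ] U₂} {κ : V₁ →ₗ[ℝ] V₂}

theorem comp {ι' : U₂ →ₗ[ℝ] U₃} {κ' : V₂ →ₗ[ℝ] V₃} (h' : IsProbPreserving G H ι' κ')
    (h : IsProbPreserving F G ι κ) : IsProbPreserving F H (ι' ∘ₗ ι) (κ' ∘ₗ κ) where
  mapsTo_states := h'.mapsTo_states.comp h.mapsTo_states
  mapsTo_effects := h'.mapsTo_effects.comp h.mapsTo_effects
  prob_map s hs e he := by
    rw [LinearMap.comp_apply, LinearMap.comp_apply,
      h'.prob_map _ (h.mapsTo_states hs) _ (h.mapsTo_effects he), h.prob_map s hs e he]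

theorem injOn_states (h : IsProbPreserving F G ι κ) : InjOn ι F.states :=
  fun s hs s' hs' hss' => F.tomo_states s hs s' hs' fun e he => by
    rw [← h.prob_map s hs e he, ← h.prob_map s' hs' e he, hss']

theorem injOn_effects (h : IsProbPreserving F G ι κ) : InjOn κ F.effects :=
  fun e he e' he' hee' => F.tomo_effects e he e' he' fun s hs => by
    rw [← h.prob_map s hs e he, ← h.prob_map s hs e' he', hee']

section SelfMap

variable [FiniteDimensional ℝ U₁] [FiniteDimensional ℝ V₁]

theorem surjOn_states_of_self {ι : U₁ →ₗ[ℝ] U₁} {κ : V₁ →ₗ[ℝ] V₁}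
    (h : IsProbPreserving F F ι κ) : SurjOn ι F.states F.states :=
  surjOn_of_preserves_pairing F.prob F.isCompact_states F.compact_effects
    h.mapsTo_states h.mapsTo_effects h.prob_map F.tomo_states

theorem surjOn_effects_of_self {ι : U₁ →ₗ[ℝ] U₁} {κ : V₁ →ₗ[ℝ] V₁}
    (h : IsProbPreserving F F ι κ) : SurjOn κ F.effects F.effects :=
  surjOn_of_preserves_pairing F.prob.flip F.compact_effects F.isCompact_states
    h.mapsTo_effects h.mapsTo_states (fun e he s hs => h.prob_map s hs e he) F.tomo_effects

end SelfMap

theorem bijOn_of_reverse [FiniteDimensional ℝ U₂] [FiniteDimensional ℝ V₂]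
    {ι' : U₂ →ₗ[ℝ] U₁} {κ' : V₂ →ₗ[ℝ] V₁}
    (h : IsProbPreserving F G ι κ) (h' : IsProbPreserving G F ι' κ') :
    BijOn ι F.states G.states ∧ BijOn κ F.effects G.effects :=
  ⟨⟨h.mapsTo_states, h.injOn_states,
      SurjOn.of_comp (f := ι') (h.comp h').surjOn_states_of_self h'.mapsTo_states⟩,
    ⟨h.mapsTo_effects, h.injOn_effects,
      SurjOn.of_comp (f := κ') (h.comp h').surjOn_effects_of_self h'.mapsTo_effects⟩⟩

end IsProbPreserving

end GPTSystem

theorem stmt9_general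
    {U₁ V₁ U₂ V₂ : Type*}
    [NormedAddCommGroup U₁] [NormedSpace ℝ U₁] [FiniteDimensional ℝ U₁]
    [NormedAddCommGroup V₁] [NormedSpace ℝ V₁] [FiniteDimensional ℝ V₁]
    [NormedAddCommGroup U₂] [NormedSpace ℝ U₂] [FiniteDimensional ℝ U₂]
    [NormedAddCommGroup V₂] [NormedSpace ℝ V₂] [FiniteDimensional ℝ V₂]
    (F : GPTSystem U₁ V₁) (G : GPTSystem U₂ V₂)
    (ι₁ : U₁ →ₗ[ℝ] U₂) (κ₁ : V₁ →ₗ[ℝ] V₂)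
    (ι₂ : U₂ →ₗ[ℝ] U₁) (κ₂ : V₂ →ₗ[ℝ] V₁)
    (hι₁ : ι₁ '' F.states ⊆ G.states) (hκ₁ : κ₁ '' F.effects ⊆ G.effects)
    (hp₁ : ∀ s ∈ F.states, ∀ e ∈ F.effects, G.prob (ι₁ s) (κ₁ e) = F.prob s e)
    (hι₂ : ι₂ '' G.states ⊆ F.states) (hκ₂ : κ₂ '' G.effects ⊆ F.effects)
    (hp₂ : ∀ s ∈ G.states, ∀ e ∈ G.effects, F.prob (ι₂ s) (κ₂ e) = G.prob s e) :
    Set.BijOn ι₁ F.states G.states ∧ Set.BijOn κ₁ F.effects G.effects ∧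
    Set.BijOn ι₂ G.states F.states ∧ Set.BijOn κ₂ G.effects F.effects := by
  have h₁ : F.IsProbPreserving G ι₁ κ₁ :=
    ⟨mapsTo_iff_image_subset.2 hι₁, mapsTo_iff_image_subset.2 hκ₁, hp₁⟩
  have h₂ : G.IsProbPreserving F ι₂ κ₂ :=
    ⟨mapsTo_iff_image_subset.2 hι₂, mapsTo_iff_image_subset.2 hκ₂, hp₂⟩
  exact ⟨(h₁.bijOn_of_reverse h₂).1, (h₁.bijOn_of_reverse h₂).2,
    (h₂.bijOn_of_reverse h₁).1, (h₂.bijOn_of_reverse h₁).2⟩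

/-- Two GPT systems that are GPT subsystems of each other are equivalent:
both embeddings are invertible (bijections between state and effect spaces). -/
theorem stmt9
    {U₁ V₁ U₂ V₂ : Type*}
    [NormedAddCommGroup U₁] [NormedSpace ℝ U₁] [FiniteDimensional ℝ U₁]
    [NormedAddCommGroup V₁] [NormedSpace ℝ V₁] [FiniteDimensional ℝ V₁]
    [NormedAddCommGroup U₂] [NormedSpace ℝ U₂] [FiniteDimensional ℝ U₂]
    [NormedAddCommGroup V₂] [NormedSpace ℝ V₂] [FiniteDimensional ℝ V₂]
    (F : GPTSystem U₁ V₁) (G : GPTSystem U₂ V₂)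
    (ι₁ : U₁ →ₗ[ℝ] U₂) (κ₁ : V₁ →ₗ[ℝ] V₂)
    (ι₂ : U₂ →ₗ[ℝ] U₁) (κ₂ : V₂ →ₗ[ℝ] V₁)
    (hι₁ : ι₁ '' F.states ⊆ G.states) (hκ₁ : κ₁ '' F.effects ⊆ G.effects)
    (hκ₁u : κ₁ F.unit = G.unit)
    (hp₁ : ∀ s ∈ F.states, ∀ e ∈ F.effects, G.prob (ι₁ s) (κ₁ e) = F.prob s e)
    (hι₂ : ι₂ '' G.states ⊆ F.states) (hκ₂ : κ₂ '' G.effects ⊆ F.effects)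
    (hκ₂u : κ₂ G.unit = F.unit)
    (hp₂ : ∀ s ∈ G.states, ∀ e ∈ G.effects, F.prob (ι₂ s) (κ₂ e) = G.prob s e) :
    Set.BijOn ι₁ F.states G.states ∧ Set.BijOn κ₁ F.effects G.effects ∧
    Set.BijOn ι₂ G.states F.states ∧ Set.BijOn κ₂ G.effects F.effects :=
  stmt9_general F G ι₁ κ₁ ι₂ κ₂ hι₁ hκ₁ hp₁ hι₂ hκ₂ hp₂
end

section
/- Let f = (Ω_f, 𝓔_f, p_f) be a GPT fragment with finitely many convexly extremal states s₁,…,s_n and extremal effects e₁,…,e_m, and let D ∈ M_{m×n}(ℝ) with D_{j,i} = p_f(s_i, e_j). Let D = E·S be a rank factorization with k = rank(D). Define σ(s_i) := i-th column of S ∈ ℝᵏ and τ(e_j) := j-th row of E ∈ (ℝᵏ)*. Then the evaluation pairing reproduces the data: τ(e_j)(σ(s_i)) = p_f(s_i, e_j) for all i, j, and the evaluation pairing restricted to span{σ(s_i)} × span{τ(e_j)} is nondegenerate on both sides. -/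
/-!
Since `rank (A * B) ≤ min (rank A) (rank B)` and `A` has `k` columns, `B` has `k` rows, a rank
factorization with `k = rank D` forces both factors to have full rank `k`. Hence the columns of `A`
and the rows of `B` are linearly independent, i.e. `u ↦ A u` and `v ↦ v B` are injective on all of
`ℝᵏ`: the evaluation pairing is nondegenerate against the reconstructed effects and states.
-/

namespace Matrix

variable {K : Type*} [Field K] {l m n : Type*}

theorem mulVec_injective_of_rank_eq_card [Fintype n] (M : Matrix m n K)
    (h : M.rank = Fintype.card n) : Function.Injective M.mulVec := by
  rw [mulVec_injective_iff, linearIndependent_iff_card_eq_finrank_span, Set.finrank,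
    ← rank_eq_finrank_span_cols, h]

theorem vecMul_injective_of_rank_eq_card [Fintype m] [Fintype n] (M : Matrix m n K)
    (h : M.rank = Fintype.card m) : Function.Injective M.vecMul := by
  rw [vecMul_injective_iff, linearIndependent_iff_card_eq_finrank_span, Set.finrank,
    ← rank_eq_finrank_span_row, h]

theorem mulVec_injective_of_rank_mul_eq_card [Fintype m] [Fintype n]
    (A : Matrix l m K) (B : Matrix m n K)
    (h : (A * B).rank = Fintype.card m) : Function.Injective A.mulVec :=
  A.mulVec_injective_of_rank_eq_card <|
    le_antisymm A.rank_le_card_width (h ▸ rank_mul_le_left A B)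

theorem vecMul_injective_of_rank_mul_eq_card [Fintype m] [Fintype n]
    (A : Matrix l m K) (B : Matrix m n K)
    (h : (A * B).rank = Fintype.card m) : Function.Injective B.vecMul :=
  B.vecMul_injective_of_rank_eq_card <|
    le_antisymm B.rank_le_card_height (h ▸ rank_mul_le_right A B)

end Matrix

open Matrix

theorem stmt18_general
    {S E : Type*} [AddCommGroup S] [Module ℝ S]
    [AddCommGroup E] [Module ℝ E]
    (p : S →ₗ[ℝ] E →ₗ[ℝ] ℝ)
    (n m k : ℕ) (s : Fin n → S) (e : Fin m → E)
    (D : Matrix (Fin m) (Fin n) ℝ)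
    (hD : ∀ (i : Fin n) (j : Fin m), D j i = p (s i) (e j))
    (A : Matrix (Fin m) (Fin k) ℝ) (B : Matrix (Fin k) (Fin n) ℝ)
    (hfact : D = A * B) (hrank : D.rank = k) :
    -- σ(s_i) := i-th column of B, τ(e_j) := j-th row of A
    (∀ (i : Fin n) (j : Fin m),
      (∑ a, A j a * B a i) = p (s i) (e j)) ∧
    (∀ u : Fin k → ℝ,
      u ∈ Submodule.span ℝ (Set.range (fun i : Fin n => fun a => B a i)) →
      (∀ j : Fin m, (∑ a, A j a * u a) = 0) → u = 0) ∧
    (∀ v : Fin k → ℝ,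
      v ∈ Submodule.span ℝ (Set.range (fun j : Fin m => fun a => A j a)) →
      (∀ i : Fin n, (∑ a, v a * B a i) = 0) → v = 0) := by
  have hAB : (A * B).rank = Fintype.card (Fin k) := by rw [← hfact, hrank, Fintype.card_fin]
  refine ⟨fun i j => by rw [← hD, hfact, mul_apply], ?_, ?_⟩
  · intro u _ hAu
    exact mulVec_injective_of_rank_mul_eq_card A B hAB <|
      (funext hAu : A *ᵥ u = 0).trans (mulVec_zero A).symm
  · intro v _ hvB
    exact vecMul_injective_of_rank_mul_eq_card A B hAB <|
      (funext hvB : v ᵥ* B = 0).trans (zero_vecMul B).symm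

/-- Theory-agnostic tomography outputs a shadow: given a rank factorization
D = A · B of the data table D_{j,i} = p_f(s_i, e_j), the reconstructed states
(columns of B) and effects (rows of A) reproduce the data under the evaluation
pairing, and this pairing is nondegenerate on the spans of the images. -/
theorem stmt18
    {S E : Type*} [AddCommGroup S] [Module ℝ S] [FiniteDimensional ℝ S]
    [AddCommGroup E] [Module ℝ E] [FiniteDimensional ℝ E]
    (p : S →ₗ[ℝ] E →ₗ[ℝ] ℝ)
    (n m k : ℕ) (s : Fin n → S) (e : Fin m → E)
    (D : Matrix (Fin m) (Fin n) ℝ)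
    (hD : ∀ (i : Fin n) (j : Fin m), D j i = p (s i) (e j))
    (A : Matrix (Fin m) (Fin k) ℝ) (B : Matrix (Fin k) (Fin n) ℝ)
    (hfact : D = A * B) (hrank : D.rank = k) :
    -- σ(s_i) := i-th column of B, τ(e_j) := j-th row of A
    (∀ (i : Fin n) (j : Fin m),
      (∑ a, A j a * B a i) = p (s i) (e j)) ∧
    (∀ u : Fin k → ℝ,
      u ∈ Submodule.span ℝ (Set.range (fun i : Fin n => fun a => B a i)) →
      (∀ j : Fin m, (∑ a, A j a * u a) = 0) → u = 0) ∧
    (∀ v : Fin k → ℝ,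
      v ∈ Submodule.span ℝ (Set.range (fun j : Fin m => fun a => A j a)) →
      (∀ i : Fin n, (∑ a, v a * B a i) = 0) → v = 0) :=
  stmt18_general p n m k s e D hD A B hfact hrank
end
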